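/- Let Ω = {M ∈ ℝ^{d×d} : M ⪰ 0, ‖M‖_F ≤ R} with R > 0. For any symmetric matrix M, the Euclidean (Frobenius) projection of M onto Ω equals M'/max(‖M'‖_F/R, 1), where M' = P(M) is the projection of M onto the cone of positive semidefinite matrices. -/

import Mathlib

/-!
If `p` is the nearest point of a convex cone `C` to `m`, the variational inequality
`⟪m - p, x - p⟫ ≤ 0` on `C`, tested at `x = 0` and `x = 2 • p`, gives `m - p ⟂ p`. Hence for
`x ∈ C` we get `‖x - m‖² ≥ ‖x - p‖² + ‖p - m‖²`, whereas `‖c • p - m‖² = (1 - c)²‖p‖² + ‖p - m‖²`;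
for `c = 1 / max (‖p‖ / R) 1` one has `(1 - c)‖p‖ = max (‖p‖ - R) 0 ≤ ‖x - p‖` as soon as
`‖x‖ ≤ R`. Flattening matrices makes the Frobenius norm Euclidean and the positive semidefinite
matrices a convex cone.
-/

/-- Frobenius norm of a real matrix. -/
noncomputable def frobNorm {d : ℕ} (M : Matrix (Fin d) (Fin d) ℝ) : ℝ :=
  Real.sqrt (∑ i, ∑ j, (M i j) ^ 2)

open RealInnerProductSpace Metric

theorem sub_div_max_div_one {a R : ℝ} (hR : 0 < R) :
    a - a / max (a / R) 1 = max (a - R) 0 := by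
  rcases le_total a R with h | h
  · rw [max_eq_right ((div_le_one hR).2 h), max_eq_right (by linarith)]
    ring
  · rw [max_eq_left ((one_le_div hR).2 h), max_eq_left (by linarith)]
    field_simp [(hR.trans_le h).ne']

section NearestPoint

variable {E : Type*} [NormedAddCommGroup E] [InnerProductSpace ℝ E]

theorem IsMinOn.inner_sub_nonpos {K : Set E} (hK : Convex ℝ K) {m p : E} (hp : p ∈ K)
    (hmin : IsMinOn (‖· - m‖) K p) {x : E} (hx : x ∈ K) : ⟪m - p, x - p⟫ ≤ 0 := by
  have : Nonempty K := ⟨⟨p, hp⟩⟩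
  refine (norm_eq_iInf_iff_real_inner_le_zero hK hp).1 (le_antisymm ?_ ?_) x hx
  · exact le_ciInf fun y => by simpa only [norm_sub_rev m] using isMinOn_iff.1 hmin y y.2
  · exact ciInf_le (f := fun y : K => ‖m - y‖)
      ⟨0, Set.forall_mem_range.2 fun _ => norm_nonneg _⟩ ⟨p, hp⟩

theorem IsMinOn.inner_sub_self_eq_zero {C : PointedCone ℝ E} {m p : E} (hp : p ∈ C)
    (hmin : IsMinOn (‖· - m‖) C p) : ⟪m - p, p⟫ = 0 := by
  have h₀ := hmin.inner_sub_nonpos C.convex hp C.zero_mem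
  have h₂ := hmin.inner_sub_nonpos C.convex hp (C.smul_mem zero_le_two hp)
  rw [zero_sub, inner_neg_right] at h₀
  rw [two_smul, add_sub_cancel_right] at h₂
  linarith

theorem PointedCone.isMinOn_smul_inter_closedBall {C : PointedCone ℝ E} {R : ℝ} (hR : 0 < R)
    {m p : E} (hp : p ∈ C) (hmin : IsMinOn (‖· - m‖) C p) :
    (1 / max (‖p‖ / R) 1) • p ∈ (C : Set E) ∩ closedBall 0 R ∧
      IsMinOn (‖· - m‖) ((C : Set E) ∩ closedBall 0 R) ((1 / max (‖p‖ / R) 1) • p) := by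
  set c := 1 / max (‖p‖ / R) 1
  have hc : 0 ≤ c := by positivity
  have hc1 : c ≤ 1 := div_le_one_of_le₀ (le_max_right _ _) (by positivity)
  have hshrink : ‖p‖ - ‖c • p‖ = max (‖p‖ - R) 0 := by
    rw [norm_smul, Real.norm_of_nonneg hc, one_div_mul_eq_div, sub_div_max_div_one hR]
  refine ⟨⟨C.smul_mem hc hp, mem_closedBall_zero_iff.2 ?_⟩, fun x ⟨hxC, hxR⟩ => ?_⟩
  · linarith [le_max_left (‖p‖ - R) 0]
  have horth : ⟪(c - 1) • p, p - m⟫ = 0 := by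
    rw [real_inner_smul_left, ← neg_sub m p, inner_neg_right, real_inner_comm,
      hmin.inner_sub_self_eq_zero hp, neg_zero, mul_zero]
  have hvar : 0 ≤ ⟪x - p, p - m⟫ := by
    have := hmin.inner_sub_nonpos C.convex hp hxC
    rw [← neg_sub p m, inner_neg_left, real_inner_comm] at this
    linarith
  have hdist : ‖(c - 1) • p‖ ≤ ‖x - p‖ := by
    have : ‖(c - 1) • p‖ = ‖p‖ - ‖c • p‖ := by
      rw [norm_smul, norm_smul, Real.norm_of_nonpos (by linarith), Real.norm_of_nonneg hc]
      ring
    rw [this, hshrink]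
    refine max_le ?_ (norm_nonneg _)
    linarith [mem_closedBall_zero_iff.1 hxR, norm_sub_norm_le p x, norm_sub_rev p x]
  show ‖c • p - m‖ ≤ ‖x - m‖
  have hcp : c • p - m = (c - 1) • p + (p - m) := by module
  have hx : x - m = (x - p) + (p - m) := by abel
  rw [← sq_le_sq₀ (norm_nonneg _) (norm_nonneg _), hcp, hx, norm_add_sq_real, norm_add_sq_real,
    horth]
  nlinarith [sq_le_sq₀ (norm_nonneg _) (norm_nonneg _) |>.2 hdist]

end NearestPoint

namespace Matrix

variable {m n : Type*}

def toEuclideanVec : Matrix m n ℝ ≃ₗ[ℝ] EuclideanSpace ℝ (m × n) :=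
  (LinearEquiv.curry ℝ ℝ m n).symm.trans (WithLp.linearEquiv 2 ℝ (m × n → ℝ)).symm

@[simp] theorem toEuclideanVec_apply (A : Matrix m n ℝ) (ij : m × n) :
    toEuclideanVec A ij = A ij.1 ij.2 :=
  rfl

def posSemidefCone (n : Type*) [Fintype n] : PointedCone ℝ (EuclideanSpace ℝ (n × n)) where
  carrier := {x | (toEuclideanVec.symm x).PosSemidef}
  add_mem' hx hy := by simpa only [Set.mem_ofPred_eq, map_add] using hx.add hy
  zero_mem' := by simpa only [Set.mem_ofPred_eq, map_zero] using PosSemidef.zero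
  smul_mem' c x hx := by
    change (toEuclideanVec.symm ((c : ℝ) • x)).PosSemidef
    rw [map_smul]
    exact hx.smul c.2

theorem toEuclideanVec_mem_posSemidefCone [Fintype n] {A : Matrix n n ℝ} :
    toEuclideanVec A ∈ posSemidefCone n ↔ A.PosSemidef := by
  simp [posSemidefCone]

end Matrix

theorem frobNorm_eq_norm_toEuclideanVec {d : ℕ} (A : Matrix (Fin d) (Fin d) ℝ) :
    frobNorm A = ‖Matrix.toEuclideanVec A‖ := by
  simp [frobNorm, EuclideanSpace.norm_eq, Fintype.sum_prod_type]

open Matrix in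
theorem projection_onto_PSD_ball_general {d : ℕ} (R : ℝ) (hR : 0 < R)
    (M M' : Matrix (Fin d) (Fin d) ℝ)
    (hM'psd : M'.PosSemidef)
    (hM'proj : ∀ X : Matrix (Fin d) (Fin d) ℝ, X.PosSemidef →
      frobNorm (M' - M) ≤ frobNorm (X - M)) :
    ((1 / max (frobNorm M' / R) 1) • M').PosSemidef ∧
    frobNorm ((1 / max (frobNorm M' / R) 1) • M') ≤ R ∧
    ∀ X : Matrix (Fin d) (Fin d) ℝ, X.PosSemidef → frobNorm X ≤ R →
      frobNorm ((1 / max (frobNorm M' / R) 1) • M' - M) ≤ frobNorm (X - M) := by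
  simp only [frobNorm_eq_norm_toEuclideanVec, map_sub, map_smul] at hM'proj ⊢
  have hmin : IsMinOn (‖· - toEuclideanVec M‖) (posSemidefCone (Fin d)) (toEuclideanVec M') :=
    isMinOn_iff.2 fun x hx => by simpa only [LinearEquiv.apply_symm_apply] using hM'proj _ hx
  obtain ⟨⟨-, hball⟩, hproj⟩ := (posSemidefCone (Fin d)).isMinOn_smul_inter_closedBall hR
    (toEuclideanVec_mem_posSemidefCone.2 hM'psd) hmin
  refine ⟨hM'psd.smul (by positivity), mem_closedBall_zero_iff.1 hball, fun X hX hXR => ?_⟩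
  exact hproj ⟨toEuclideanVec_mem_posSemidefCone.2 hX, mem_closedBall_zero_iff.2 hXR⟩

theorem projection_onto_PSD_ball {d : ℕ} (R : ℝ) (hR : 0 < R)
    (M M' : Matrix (Fin d) (Fin d) ℝ) (hM : M.IsSymm)
    (hM'psd : M'.PosSemidef)
    (hM'proj : ∀ X : Matrix (Fin d) (Fin d) ℝ, X.PosSemidef →
      frobNorm (M' - M) ≤ frobNorm (X - M)) :
    ((1 / max (frobNorm M' / R) 1) • M').PosSemidef ∧
    frobNorm ((1 / max (frobNorm M' / R) 1) • M') ≤ R ∧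
    ∀ X : Matrix (Fin d) (Fin d) ℝ, X.PosSemidef → frobNorm X ≤ R →
      frobNorm ((1 / max (frobNorm M' / R) 1) • M' - M) ≤ frobNorm (X - M) :=
  projection_onto_PSD_ball_general R hR M M' hM'psd hM'proj
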